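/- arXiv:1512.07187 — 3 statements merged into one kernel-verified Lean document; each statement's English description precedes it below -/
import Mathlib

section
/- Let γ ∈ (1,2) and Γ ∈ ℝ with Γ ≠ 0. Suppose V : (0,t0] → (-1,1) is differentiable, nowhere zero, and satisfies t·V'(t) = Γ·V(t)·(1-V(t)^2)/(1-(γ-1)V(t)^2) for all t ∈ (0,t0]. Then the function t ↦ V(t)/(1-V(t)^2)^((2-γ)/2) · t^(-Γ) is constant on (0,t0]. -/
/-! The profile `G(v) = v / (1 - v²)^((2-γ)/2)` satisfies
`G'(v) = (1 - (γ-1)v²) / (1 - v²)^((2-γ)/2 + 1)`, so along a solution the ODE gives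
`d/dt G(V t) = Γ G(V t) / t`, which is exactly cancelled by the derivative of `t^(-Γ)`.
A function with zero derivative on the interval `(0, t0]` is constant there. -/

open Set

theorem Convex.eq_of_forall_hasDerivWithinAt_zero {𝕜 E : Type*} [RCLike 𝕜] [NormedAddCommGroup E]
    [NormedSpace 𝕜 E] {f : 𝕜 → E} {s : Set 𝕜} (hs : Convex ℝ s)
    (hf : ∀ x ∈ s, HasDerivWithinAt f 0 s x) {x y : 𝕜} (hx : x ∈ s) (hy : y ∈ s) :
    f x = f y := by
  have := hs.norm_image_sub_le_of_norm_hasDerivWithin_le hf (fun _ _ => norm_zero.le) hx hy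
  rw [zero_mul, norm_le_zero_iff, sub_eq_zero] at this
  exact this.symm

theorem hasDerivAt_div_one_sub_sq_rpow (a : ℝ) {x : ℝ} (hx : x ^ 2 < 1) :
    HasDerivAt (fun y => y / (1 - y ^ 2) ^ a)
      ((1 - (1 - 2 * a) * x ^ 2) / (1 - x ^ 2) ^ (a + 1)) x := by
  have hpos : 0 < 1 - x ^ 2 := by linarith
  have hbase : HasDerivAt (fun y => 1 - y ^ 2) (-(2 * x)) x := by
    simpa using ((hasDerivAt_pow 2 x).const_sub 1)
  have hpow := hbase.rpow_const (p := a) (Or.inl hpos.ne')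
  refine ((hasDerivAt_id x).div hpow (Real.rpow_pos_of_pos hpos a).ne').congr_deriv ?_
  simp only [id]
  rw [Real.rpow_add_one hpos.ne', Real.rpow_sub_one hpos.ne']
  field_simp
  ring

theorem hasDerivAt_velocity_invariant {γ Γ t V' : ℝ} {V : ℝ → ℝ} (hV : HasDerivAt V V' t)
    (ht : 0 < t) (hV1 : V t ^ 2 < 1) (hD : 1 - (γ - 1) * V t ^ 2 ≠ 0)
    (hode : t * V' = Γ * V t * (1 - V t ^ 2) / (1 - (γ - 1) * V t ^ 2)) :
    HasDerivAt (fun s => V s / (1 - V s ^ 2) ^ ((2 - γ) / 2) * s ^ (-Γ)) 0 t := by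
  have hpos : 0 < 1 - V t ^ 2 := by linarith
  have hprofile := (hasDerivAt_div_one_sub_sq_rpow ((2 - γ) / 2) hV1).comp t hV
  have htpow := Real.hasDerivAt_rpow_const (p := -Γ) (Or.inl ht.ne')
  refine (hprofile.mul htpow).congr_deriv ?_
  have hV' : V' = Γ * V t * (1 - V t ^ 2) / (1 - (γ - 1) * V t ^ 2) / t := by
    rw [eq_div_iff ht.ne', mul_comm, hode]
  have hcoef : 1 - (1 - 2 * ((2 - γ) / 2)) * V t ^ 2 = 1 - (γ - 1) * V t ^ 2 := by ring
  have hrpow : 0 < (1 - V t ^ 2) ^ ((2 - γ) / 2) := Real.rpow_pos_of_pos hpos _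
  simp only [Function.comp_apply]
  rw [hcoef, hV', Real.rpow_add_one hpos.ne', Real.rpow_sub_one ht.ne']
  field_simp
  ring

theorem V_implicit_conservation_general (γ Γ t0 : ℝ) (hγ2 : γ < 2)
    (V : ℝ → ℝ)
    (hdiff : ∀ t ∈ Set.Ioc (0:ℝ) t0, DifferentiableAt ℝ V t)
    (hrange : ∀ t ∈ Set.Ioc (0:ℝ) t0, V t ∈ Set.Ioo (-1:ℝ) 1)
    (hode : ∀ t ∈ Set.Ioc (0:ℝ) t0,
      t * deriv V t = Γ * V t * (1 - (V t)^2) / (1 - (γ - 1) * (V t)^2)) :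
    ∀ s ∈ Set.Ioc (0:ℝ) t0, ∀ t ∈ Set.Ioc (0:ℝ) t0,
      V s / (1 - (V s)^2) ^ ((2 - γ)/2) * s ^ (-Γ)
        = V t / (1 - (V t)^2) ^ ((2 - γ)/2) * t ^ (-Γ) := by
  have hderiv : ∀ t ∈ Ioc (0:ℝ) t0, HasDerivWithinAt
      (fun s => V s / (1 - V s ^ 2) ^ ((2 - γ) / 2) * s ^ (-Γ)) 0 (Ioc 0 t0) t := by
    intro t ht
    have hV1 : V t ^ 2 < 1 := sq_lt_one_iff_abs_lt_one _ |>.mpr (abs_lt.mpr (hrange t ht))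
    have hD : 0 < 1 - (γ - 1) * V t ^ 2 := by
      nlinarith [mul_nonneg (sub_nonneg.mpr hγ2.le) (sq_nonneg (V t))]
    exact (hasDerivAt_velocity_invariant (hdiff t ht).hasDerivAt ht.1 hV1 hD.ne'
      (hode t ht)).hasDerivWithinAt
  exact fun s hs t ht => (convex_Ioc 0 t0).eq_of_forall_hasDerivWithinAt_zero hderiv hs ht

theorem V_implicit_conservation (γ Γ t0 : ℝ) (hγ : 1 < γ) (hγ2 : γ < 2)
    (hΓ : Γ ≠ 0) (ht0 : 0 < t0)
    (V : ℝ → ℝ)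
    (hdiff : ∀ t ∈ Set.Ioc (0:ℝ) t0, DifferentiableAt ℝ V t)
    (hrange : ∀ t ∈ Set.Ioc (0:ℝ) t0, V t ∈ Set.Ioo (-1:ℝ) 1)
    (hne : ∀ t ∈ Set.Ioc (0:ℝ) t0, V t ≠ 0)
    (hode : ∀ t ∈ Set.Ioc (0:ℝ) t0,
      t * deriv V t = Γ * V t * (1 - (V t)^2) / (1 - (γ - 1) * (V t)^2)) :
    ∀ s ∈ Set.Ioc (0:ℝ) t0, ∀ t ∈ Set.Ioc (0:ℝ) t0,
      V s / (1 - (V s)^2) ^ ((2 - γ)/2) * s ^ (-Γ)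
        = V t / (1 - (V t)^2) ^ ((2 - γ)/2) * t ^ (-Γ) :=
  V_implicit_conservation_general γ Γ t0 hγ2 V hdiff hrange hode
end

section
/- Let γ ∈ (1,2), Γ < 0, C1 ≠ 0, and suppose V : (0,δ] → (-1,1) satisfies V(t)/(1-V(t)^2)^((2-γ)/2) = C1 t^Γ for all t ∈ (0,δ]. Then |V(t)| → 1 as t → 0+. -/
theorem V_tendsto_one_supercritical (γ Γ C1 δ : ℝ) (hγ : 1 < γ) (hγ2 : γ < 2)
    (hΓ : Γ < 0) (hC1 : C1 ≠ 0) (hδ : 0 < δ)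
    (V : ℝ → ℝ)
    (hrange : ∀ t ∈ Set.Ioc (0:ℝ) δ, V t ∈ Set.Ioo (-1:ℝ) 1)
    (himp : ∀ t ∈ Set.Ioc (0:ℝ) δ,
      V t / (1 - (V t)^2) ^ ((2 - γ)/2) = C1 * t ^ Γ) :
    Filter.Tendsto (fun t => |V t|) (nhdsWithin 0 (Set.Ioi 0)) (nhds 1) := by
  set p : ℝ := (2 - γ)/2 with hp
  have hp0 : 0 < p := by
    rw [hp]; linarith
  have hC1' : 0 < |C1| := abs_pos.mpr hC1
  -- t ^ Γ → ∞ as t → 0+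
  have h1 : Filter.Tendsto (fun t : ℝ => t ^ Γ) (nhdsWithin 0 (Set.Ioi 0))
      Filter.atTop := by
    have hcomp : Filter.Tendsto (fun t : ℝ => (t⁻¹) ^ (-Γ)) (nhdsWithin 0 (Set.Ioi 0))
        Filter.atTop :=
      (tendsto_rpow_atTop (by linarith : (0:ℝ) < -Γ)).comp tendsto_inv_nhdsGT_zero
    refine hcomp.congr' ?_
    filter_upwards [self_mem_nhdsWithin] with t ht
    have ht0 : (0:ℝ) < t := ht
    rw [Real.inv_rpow ht0.le, Real.rpow_neg ht0.le, inv_inv]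
  have hg : Filter.Tendsto (fun t : ℝ => |C1| * t ^ Γ) (nhdsWithin 0 (Set.Ioi 0))
      Filter.atTop := h1.const_mul_atTop hC1'
  -- eventual key bound
  have hev : ∀ᶠ t in nhdsWithin 0 (Set.Ioi 0),
      1 - (|C1| * t ^ Γ) ^ (-(1/p)) ≤ (V t)^2 ∧ (V t)^2 ≤ 1 := by
    filter_upwards [Ioc_mem_nhdsGT_of_mem ⟨le_refl (0:ℝ), hδ⟩,
      hg.eventually_ge_atTop 1] with t htI htg
    have ht0 : 0 < t := htI.1
    have hV := hrange t htI
    have hVsq : (V t)^2 < 1 := by nlinarith [hV.1, hV.2]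
    have hpos : 0 < 1 - (V t)^2 := by linarith
    have hrp : 0 < (1 - (V t)^2) ^ p := Real.rpow_pos_of_pos hpos p
    have htΓ : 0 < t ^ Γ := Real.rpow_pos_of_pos ht0 Γ
    have hgpos : 0 < |C1| * t ^ Γ := by positivity
    have heq := himp t htI
    -- |V t| = |C1| * t^Γ * (1 - V²)^p
    have hV' : V t = C1 * t ^ Γ * (1 - (V t)^2) ^ p := by
      field_simp at heq
      linarith [heq]
    have habs : |V t| = (|C1| * t ^ Γ) * (1 - (V t)^2) ^ p := by
      have h := congrArg abs hV'
      rwa [abs_mul, abs_mul, abs_of_pos htΓ, abs_of_pos hrp] at h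
    have hVle1 : |V t| ≤ 1 := by
      have := abs_lt.mpr ⟨hV.1, hV.2⟩
      linarith
    have hkey : (1 - (V t)^2) ^ p ≤ (|C1| * t ^ Γ)⁻¹ := by
      rw [inv_eq_one_div, le_div_iff₀ hgpos]
      nlinarith [habs, hVle1, abs_nonneg (V t)]
    -- raise to power 1/p
    have hmono : ((1 - (V t)^2) ^ p) ^ (1/p) ≤ ((|C1| * t ^ Γ)⁻¹) ^ (1/p) :=
      Real.rpow_le_rpow (le_of_lt hrp) hkey (by positivity)
    have hleft : ((1 - (V t)^2) ^ p) ^ (1/p) = 1 - (V t)^2 := by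
      rw [← Real.rpow_mul hpos.le, mul_one_div, div_self hp0.ne', Real.rpow_one]
    have hright : ((|C1| * t ^ Γ)⁻¹) ^ (1/p) = (|C1| * t ^ Γ) ^ (-(1/p)) := by
      rw [Real.inv_rpow hgpos.le, Real.rpow_neg hgpos.le]
    rw [hleft, hright] at hmono
    exact ⟨by linarith, hVsq.le⟩
  -- lower bound tends to 1
  have hlow : Filter.Tendsto (fun t : ℝ => 1 - (|C1| * t ^ Γ) ^ (-(1/p)))
      (nhdsWithin 0 (Set.Ioi 0)) (nhds 1) := by
    have := (tendsto_rpow_neg_atTop (by positivity : (0:ℝ) < 1/p)).comp hg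
    have h2 : Filter.Tendsto (fun t : ℝ => (|C1| * t ^ Γ) ^ (-(1/p)))
        (nhdsWithin 0 (Set.Ioi 0)) (nhds 0) := this
    have := h2.const_sub 1
    simpa using this
  have hsq : Filter.Tendsto (fun t => (V t)^2) (nhdsWithin 0 (Set.Ioi 0)) (nhds 1) := by
    refine tendsto_of_tendsto_of_tendsto_of_le_of_le' hlow tendsto_const_nhds ?_ ?_
    · filter_upwards [hev] with t ht using ht.1
    · filter_upwards [hev] with t ht using ht.2
  have := (Real.continuous_sqrt.tendsto 1).comp hsq
  simp only [Real.sqrt_one] at this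
  refine this.congr ?_
  intro t
  simp [Function.comp, Real.sqrt_sq_eq_abs]
end

section
/- Let γ ∈ (1,2) and Γ ∈ ℝ. Suppose v^0, V : (0,t0] → ℝ are differentiable with v^0 > 0, V takes values in (-1,1)\{0}, and they satisfy t·(v^0)'(t)/v^0(t) = Γ(1+V(t)^2)/(1-(γ-1)V(t)^2) and t·V'(t) = Γ V(t)(1-V(t)^2)/(1-(γ-1)V(t)^2). Then the function t ↦ v^0(t)·(1-V(t)^2)/V(t) is constant on (0,t0]. -/
theorem v0_V_conservation (γ Γ t0 : ℝ) (hγ : 1 < γ) (hγ2 : γ < 2) (ht0 : 0 < t0)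
    (v0 V : ℝ → ℝ)
    (hdiffv : ∀ t ∈ Set.Ioc (0:ℝ) t0, DifferentiableAt ℝ v0 t)
    (hdiffV : ∀ t ∈ Set.Ioc (0:ℝ) t0, DifferentiableAt ℝ V t)
    (hpos : ∀ t ∈ Set.Ioc (0:ℝ) t0, 0 < v0 t)
    (hrange : ∀ t ∈ Set.Ioc (0:ℝ) t0, V t ∈ Set.Ioo (-1:ℝ) 1 ∧ V t ≠ 0)
    (hode0 : ∀ t ∈ Set.Ioc (0:ℝ) t0,
      t * deriv v0 t / v0 t = Γ * (1 + (V t)^2) / (1 - (γ - 1) * (V t)^2))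
    (hodeV : ∀ t ∈ Set.Ioc (0:ℝ) t0,
      t * deriv V t = Γ * V t * (1 - (V t)^2) / (1 - (γ - 1) * (V t)^2)) :
    ∀ s ∈ Set.Ioc (0:ℝ) t0, ∀ t ∈ Set.Ioc (0:ℝ) t0,
      v0 s * (1 - (V s)^2) / V s = v0 t * (1 - (V t)^2) / V t := by
  set g : ℝ → ℝ := fun t => v0 t * (1 - (V t)^2) / V t with hg
  have key : ∀ t ∈ Set.Ioc (0:ℝ) t0, HasDerivAt g 0 t := by
    intro t ht
    obtain ⟨ht1, ht2⟩ := ht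
    obtain ⟨⟨hV1, hV2⟩, hVne⟩ := hrange t ⟨ht1, ht2⟩
    have hv0 := hpos t ⟨ht1, ht2⟩
    have hD : (1 - (γ - 1) * (V t)^2) ≠ 0 := by
      have h1 : (V t)^2 < 1 := by nlinarith
      nlinarith
    have htne : t ≠ 0 := ne_of_gt ht1
    have hdv : deriv v0 t = v0 t * (Γ * (1 + (V t)^2)) / ((1 - (γ - 1) * (V t)^2) * t) := by
      have := hode0 t ⟨ht1, ht2⟩
      field_simp at this ⊢
      nlinarith [this]
    have hdV : deriv V t = Γ * V t * (1 - (V t)^2) / ((1 - (γ - 1) * (V t)^2) * t) := by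
      have := hodeV t ⟨ht1, ht2⟩
      field_simp at this ⊢
      linarith [this]
    have Hv : HasDerivAt v0 (deriv v0 t) t := (hdiffv t ⟨ht1, ht2⟩).hasDerivAt
    have HV : HasDerivAt V (deriv V t) t := (hdiffV t ⟨ht1, ht2⟩).hasDerivAt
    have Hnum : HasDerivAt (fun t => v0 t * (1 - (V t)^2))
        (deriv v0 t * (1 - (V t)^2) + v0 t * (0 - 2 * V t ^ 1 * deriv V t)) t := by
      exact Hv.mul ((hasDerivAt_const t (1:ℝ)).sub (HV.pow 2) |>.congr_deriv (by ring))
    have H : HasDerivAt g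
        (((deriv v0 t * (1 - (V t)^2) + v0 t * (0 - 2 * V t ^ 1 * deriv V t)) * V t
          - v0 t * (1 - (V t)^2) * deriv V t) / (V t)^2) t := Hnum.div HV hVne
    convert H using 1
    rw [hdv, hdV]
    field_simp
    ring
  have hconv : Convex ℝ (Set.Ioc (0:ℝ) t0) := convex_Ioc _ _
  intro s hs t ht
  have := hconv.is_const_of_fderivWithin_eq_zero (f := g)
    (fun x hx => ((key x hx).differentiableAt).differentiableWithinAt)
    (fun x hx => by
      have hu : UniqueDiffWithinAt ℝ (Set.Ioc (0:ℝ) t0) x := uniqueDiffOn_Ioc 0 t0 x hx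
      rw [(key x hx).differentiableAt.fderivWithin hu, (key x hx).hasFDerivAt.fderiv]
      ext; simp) hs ht
  exact this
end
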